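/- arXiv:2404.07666 — 5 statements merged into one kernel-verified Lean document; each statement's English description precedes it below -/
import Mathlib

section
/- For all real x ≥ 1, we have 1 + x·ln(x/(1+x)) < 1/(2(x+0.5)). -/
/-! The series `log (1 + 1/x) = 2 ∑ₖ (2x+1)^{-(2k+1)} / (2k+1)` has positive terms, so its first
term gives `log (1 + 1/x) > 2/(2x+1)` for every `x > 0`. Since `log (x/(1+x)) = -log (1 + 1/x)`,
the left-hand side is then below `1 - 2x/(2x+1) = 1/(2x+1)`. -/

open Real

theorem Real.two_div_two_mul_add_one_lt_log_one_add_inv {a : ℝ} (ha : 0 < a) :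
    2 / (2 * a + 1) < log (1 + a⁻¹) := by
  have hsum := lt_hasSum (hasSum_log_one_add_inv ha) 0 (fun _ _ ↦ by positivity) 1 one_ne_zero
    (by positivity)
  simpa [div_eq_mul_inv] using hsum

theorem stmt_0 (x : ℝ) (hx : 1 ≤ x) :
    1 + x * Real.log (x / (1 + x)) < 1 / (2 * (x + 0.5)) := by
  have hx0 : 0 < x := by linarith
  have hlog : log (x / (1 + x)) = -log (1 + x⁻¹) := by
    rw [← log_inv]
    congr 1
    field_simp
    ring
  have hrhs : 1 / (2 * (x + 0.5)) = 1 - x * (2 / (2 * x + 1)) := by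
    field_simp
    ring
  have hbound := mul_lt_mul_of_pos_left (two_div_two_mul_add_one_lt_log_one_add_inv hx0) hx0
  rw [hlog, hrhs]
  linarith
end

section
/- For all real t > 1, t + (t³ − t)·ln(1 − 1/t²) > 1/(2t). -/
/-!
For `x = 1 - 1/t² ∈ (0, 1)` we have `log x > sinh (log x) = (x - x⁻¹)/2`, and replacing the
logarithm by this lower bound turns the left-hand side into exactly `1/(2t)`.
-/

open Real

theorem Real.sub_inv_div_two_lt_log {x : ℝ} (hx0 : 0 < x) (hx1 : x < 1) :
    (x - x⁻¹) / 2 < log x := by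
  rw [← sinh_log hx0]
  exact sinh_lt_self_iff.2 (log_neg hx0 hx1)

theorem stmt_4 (t : ℝ) (ht : 1 < t) :
    t + (t ^ 3 - t) * Real.log (1 - 1 / t ^ 2) > 1 / (2 * t) := by
  have ht0 : 0 < t := by linarith
  have hsq : 1 < t ^ 2 := by nlinarith
  have hx0 : 0 < 1 - 1 / t ^ 2 := by
    rw [sub_pos, div_lt_one (by positivity)]; exact hsq
  have hx1 : 1 - 1 / t ^ 2 < 1 := by
    rw [sub_lt_self_iff]; positivity
  have hcoef : 0 < t ^ 3 - t := by nlinarith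
  calc 1 / (2 * t) = t + (t ^ 3 - t) * ((1 - 1 / t ^ 2 - (1 - 1 / t ^ 2)⁻¹) / 2) := by
        have : t ^ 2 - 1 ≠ 0 := by linarith
        field_simp
        ring
    _ < t + (t ^ 3 - t) * log (1 - 1 / t ^ 2) := by
      gcongr
      exact Real.sub_inv_div_two_lt_log hx0 hx1
end

section
/- Let F be holomorphic on the unit disk D with F(z) = Σ_{n≥0} a_n z^n and |F(z)| ≤ 1 for all z ∈ D. Then |a_n| ≤ 1 − |a_0|² for every n ≥ 1. -/
/-! Averaging `F (ζ ^ j * z)` over the `n`-th roots of unity `ζ ^ j` shows that the multisection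
`g w = ∑ k, a (n * k) * w ^ k` is again bounded by `1` on the disk, with `g 0 = a 0` and
`g' 0 = a n`. The bound is then the Schwarz–Pick inequality `‖g' 0‖ ≤ 1 - ‖g 0‖ ^ 2`, which follows
from Schwarz's lemma applied to `g` composed with the disk automorphism sending `g 0` to `0`. -/

open Metric Complex ComplexConjugate Set Finset

namespace IsPrimitiveRoot

variable {R : Type*} [CommRing R] [IsDomain R] {ζ : R} {n : ℕ}

theorem sum_pow_pow_eq_ite (hζ : IsPrimitiveRoot ζ n) (m : ℕ) :
    ∑ j ∈ range n, (ζ ^ j) ^ m = if n ∣ m then (n : R) else 0 := by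
  simp_rw [← pow_mul, mul_comm _ m, pow_mul]
  split_ifs with hdvd
  · simp [(hζ.pow_eq_one_iff_dvd m).2 hdvd]
  · have hne : ζ ^ m ≠ 1 := mt (hζ.pow_eq_one_iff_dvd m).1 hdvd
    have h := geom_sum_mul (ζ ^ m) n
    rw [← pow_mul, mul_comm m n, pow_mul, hζ.pow_eq_one, one_pow, sub_self] at h
    exact (mul_eq_zero.1 h).resolve_right (sub_ne_zero.2 hne)

theorem hasSum_multisection [TopologicalSpace R] [ContinuousAdd R] (hζ : IsPrimitiveRoot ζ n)
    {u s : ℕ → R} (hs : ∀ j, HasSum (fun m => (ζ ^ j) ^ m * u m) (s j)) :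
    HasSum (fun k => n * u (n * k)) (∑ j ∈ range n, s j) := by
  rcases n.eq_zero_or_pos with rfl | hn
  · simp
  have htwisted : HasSum (fun m => if n ∣ m then n * u m else 0) (∑ j ∈ range n, s j) := by
    refine (hasSum_sum fun j _ => hs j).congr_fun fun m => ?_
    rw [← Finset.sum_mul, hζ.sum_pow_pow_eq_ite]
    split_ifs <;> simp
  have hinj : Function.Injective (n * ·) := fun _ _ => Nat.eq_of_mul_eq_mul_left hn
  rw [← hinj.hasSum_iff] at htwisted
  · simpa [Function.comp_def] using htwisted
  · intro m hm
    rw [if_neg fun ⟨k, hk⟩ => hm ⟨k, hk.symm⟩]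

end IsPrimitiveRoot

namespace Complex

theorem norm_sub_le_norm_one_sub_conj_mul {b w : ℂ} (hb : ‖b‖ ≤ 1) (hw : ‖w‖ ≤ 1) :
    ‖b - w‖ ≤ ‖1 - conj b * w‖ := by
  have hsq : normSq (1 - conj b * w) - normSq (b - w) = (1 - normSq b) * (1 - normSq w) := by
    simp only [normSq_apply, sub_re, sub_im, mul_re, mul_im, one_re, one_im, conj_re, conj_im]
    ring
  have hb' : normSq b ≤ 1 := by rw [← Complex.sq_norm]; nlinarith [norm_nonneg b]
  have hw' : normSq w ≤ 1 := by rw [← Complex.sq_norm]; nlinarith [norm_nonneg w]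
  refine (sq_le_sq₀ (norm_nonneg _) (norm_nonneg _)).1 ?_
  rw [Complex.sq_norm, Complex.sq_norm]
  nlinarith

theorem norm_deriv_le_one_sub_sq_of_norm_lt_one {g : ℂ → ℂ}
    (hg : DifferentiableOn ℂ g (ball 0 1)) (hmaps : MapsTo g (ball 0 1) (closedBall 0 1))
    (h0 : ‖g 0‖ < 1) :
    ‖deriv g 0‖ ≤ 1 - ‖g 0‖ ^ 2 := by
  set b := g 0
  have hden : ∀ w ∈ ball (0 : ℂ) 1, 1 - conj b * g w ≠ 0 := by
    intro w hw
    have hgw : ‖g w‖ ≤ 1 := mem_closedBall_zero_iff.1 (hmaps hw)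
    have hlt : ‖conj b * g w‖ < 1 :=
      calc ‖conj b * g w‖ = ‖b‖ * ‖g w‖ := by rw [norm_mul, norm_conj]
        _ < 1 := by nlinarith [norm_nonneg b, norm_nonneg (g w)]
    exact sub_ne_zero.2 fun h => by simp [← h] at hlt
  set M : ℂ → ℂ := fun z => (b - g z) / (1 - conj b * g z)
  have hM : DifferentiableOn ℂ M (ball 0 1) :=
    ((differentiableOn_const _).sub hg).div
      ((differentiableOn_const _).sub ((differentiableOn_const _).mul hg)) hden
  have hMmaps : MapsTo M (ball 0 1) (closedBall (M 0) 1) := by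
    intro w hw
    rw [show M 0 = 0 by simp [M, b], mem_closedBall_zero_iff, norm_div,
      div_le_one (norm_pos_iff.2 (hden w hw))]
    exact norm_sub_le_norm_one_sub_conj_mul h0.le (mem_closedBall_zero_iff.1 (hmaps hw))
  have hpos : 0 < 1 - ‖b‖ ^ 2 := by nlinarith [norm_nonneg b]
  have hderivM : deriv M 0 = -deriv g 0 / (1 - ‖b‖ ^ 2 : ℝ) := by
    have hg0 : HasDerivAt g (deriv g 0) 0 :=
      (hg.differentiableAt (ball_mem_nhds 0 one_pos)).hasDerivAt
    have hden0 : (1 : ℂ) - conj b * b = (1 - ‖b‖ ^ 2 : ℝ) := by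
      rw [conj_mul']; push_cast; ring
    refine ((hg0.const_sub b).div ((hg0.const_mul (conj b)).const_sub 1)
      (hden 0 (mem_ball_self one_pos))).deriv.trans ?_
    rw [sub_self, zero_mul, sub_zero, hden0]
    have : ((1 - ‖b‖ ^ 2 : ℝ) : ℂ) ≠ 0 := ofReal_ne_zero.2 hpos.ne'
    field_simp
  have hSchwarz : ‖deriv M 0‖ ≤ 1 := by
    simpa using norm_deriv_le_div_of_mapsTo_ball hM hMmaps one_pos
  rw [hderivM, norm_div, norm_neg, norm_real, Real.norm_of_nonneg hpos.le,
    div_le_one hpos] at hSchwarz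
  exact hSchwarz

theorem norm_deriv_le_one_sub_sq {g : ℂ → ℂ}
    (hg : DifferentiableOn ℂ g (ball 0 1)) (hmaps : MapsTo g (ball 0 1) (closedBall 0 1)) :
    ‖deriv g 0‖ ≤ 1 - ‖g 0‖ ^ 2 := by
  have h0 : (0 : ℂ) ∈ ball (0 : ℂ) 1 := mem_ball_self one_pos
  rcases (mem_closedBall_zero_iff.1 (hmaps h0)).lt_or_eq with hlt | heq
  · exact norm_deriv_le_one_sub_sq_of_norm_lt_one hg hmaps hlt
  have hmax : IsMaxOn (norm ∘ g) (ball 0 1) 0 := fun w hw => by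
    simpa [heq] using mem_closedBall_zero_iff.1 (hmaps hw)
  have hconst : g =ᶠ[nhds 0] fun _ => g 0 :=
    Filter.eventually_of_mem (ball_mem_nhds 0 one_pos) <|
      eqOn_of_isPreconnected_of_isMaxOn_norm (convex_ball 0 1).isPreconnected isOpen_ball hg h0 hmax
  simp [hconst.deriv_eq, heq]

end Complex

open FormalMultilinearSeries in
theorem norm_coeff_one_le_one_sub_sq {c : ℕ → ℂ}
    (hc : ∀ w ∈ ball (0 : ℂ) 1, ∃ s, HasSum (fun k => c k * w ^ k) s ∧ ‖s‖ ≤ 1) :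
    ‖c 1‖ ≤ 1 - ‖c 0‖ ^ 2 := by
  have hradius : 1 ≤ (ofScalars ℂ c).radius := by
    refine ENNReal.le_of_forall_nnreal_lt fun r hr => ?_
    obtain ⟨s, hs, -⟩ := hc r (by simpa [abs_of_nonneg r.coe_nonneg] using hr)
    refine (ofScalars ℂ c).le_radius_of_tendsto (l := 0) ?_
    simpa [ofScalars_norm] using hs.summable.tendsto_atTop_zero.norm
  have hg : HasFPowerSeriesOnBall (ofScalarsSum c) (ofScalars ℂ c) 0 1 :=
    ((ofScalars ℂ c).hasFPowerSeriesOnBall (one_pos.trans_le hradius)).mono one_pos hradius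
  have hmaps : MapsTo (ofScalarsSum (E := ℂ) c) (ball 0 1) (closedBall 0 1) := by
    intro w hw
    obtain ⟨s, hs, hs1⟩ := hc w hw
    simpa [ofScalars_sum_eq, hs.tsum_eq] using hs1
  have hdiff : DifferentiableOn ℂ (ofScalarsSum (E := ℂ) c) (ball 0 1) := by
    simpa only [← ENNReal.coe_one, eball_coe, NNReal.coe_one] using hg.differentiableOn
  simpa [hg.hasFPowerSeriesAt.deriv, ofScalars_apply_eq] using
    norm_deriv_le_one_sub_sq hdiff hmaps

theorem exists_hasSum_multisection_norm_le {F : ℂ → ℂ} {a : ℕ → ℂ} {C : ℝ}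
    (hsum : ∀ z ∈ ball (0 : ℂ) 1, HasSum (fun m => a m * z ^ m) (F z))
    (hbd : ∀ z ∈ ball (0 : ℂ) 1, ‖F z‖ ≤ C) {n : ℕ} (hn : 0 < n) {w : ℂ}
    (hw : w ∈ ball (0 : ℂ) 1) :
    ∃ s, HasSum (fun k => a (n * k) * w ^ k) s ∧ ‖s‖ ≤ C := by
  obtain ⟨z, rfl⟩ := IsAlgClosed.exists_pow_nat_eq w hn
  have hz : ‖z‖ < 1 := by
    rw [mem_ball_zero_iff, norm_pow] at hw
    exact (pow_lt_one_iff_of_nonneg (norm_nonneg z) hn.ne').1 hw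
  obtain ⟨ζ, hζ⟩ : ∃ ζ : ℂ, IsPrimitiveRoot ζ n := ⟨_, isPrimitiveRoot_exp n hn.ne'⟩
  have hmem : ∀ j : ℕ, ζ ^ j * z ∈ ball (0 : ℂ) 1 := fun j => by
    simpa [hζ.norm'_eq_one hn.ne'] using hz
  have hsection := hζ.hasSum_multisection (u := fun m => a m * z ^ m) fun j =>
    (hsum _ (hmem j)).congr_fun fun m => by ring
  refine ⟨(n : ℂ)⁻¹ * ∑ j ∈ range n, F (ζ ^ j * z), ?_, ?_⟩
  · refine (hsection.mul_left (n : ℂ)⁻¹).congr_fun fun k => ?_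
    have : (n : ℂ) ≠ 0 := Nat.cast_ne_zero.2 hn.ne'
    field_simp
    ring
  · have hnR : (0 : ℝ) < n := Nat.cast_pos.2 hn
    calc ‖(n : ℂ)⁻¹ * ∑ j ∈ range n, F (ζ ^ j * z)‖
        ≤ (n : ℝ)⁻¹ * ∑ j ∈ range n, ‖F (ζ ^ j * z)‖ := by
          rw [norm_mul, norm_inv, Complex.norm_natCast]
          gcongr
          exact norm_sum_le _ _
      _ ≤ (n : ℝ)⁻¹ * ∑ _j ∈ range n, C := by
          gcongr with j
          exact hbd _ (hmem j)
      _ = C := by simp [hnR.ne']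

theorem stmt_8_general (F : ℂ → ℂ) (a : ℕ → ℂ)
    (hsum : ∀ z ∈ ball (0 : ℂ) 1, HasSum (fun n : ℕ => a n * z ^ n) (F z))
    (hbd : ∀ z ∈ ball (0 : ℂ) 1, ‖F z‖ ≤ 1) :
    ∀ n : ℕ, 1 ≤ n → ‖a n‖ ≤ 1 - (‖a 0‖) ^ 2 := by
  intro n hn
  simpa using norm_coeff_one_le_one_sub_sq fun w hw =>
    exists_hasSum_multisection_norm_le hsum hbd hn hw

theorem stmt_8 (F : ℂ → ℂ) (a : ℕ → ℂ)
    (hF : DifferentiableOn ℂ F (ball (0 : ℂ) 1))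
    (hsum : ∀ z ∈ ball (0 : ℂ) 1, HasSum (fun n : ℕ => a n * z ^ n) (F z))
    (hbd : ∀ z ∈ ball (0 : ℂ) 1, ‖F z‖ ≤ 1) :
    ∀ n : ℕ, 1 ≤ n → ‖a n‖ ≤ 1 - (‖a 0‖) ^ 2 :=
  stmt_8_general F a hsum hbd
end

section
/- Let h(z) = Σ_{n≥1} a_n z^n and g(z) = Σ_{n≥1} b_n z^n be holomorphic on the unit disk D. Suppose ||a_1| − |b_1|| ≥ 1 and |h'(z)| + |g'(z)| ≤ Λ for all z ∈ D with Λ ≥ 1. Then for each n ≥ 2, |a_n| + |b_n| ≤ (Λ² − 1)/(nΛ). -/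
/-!
For `‖u‖ = 1` the function `F = h' + u • g'` has Taylor coefficients
`(k + 1) (a (k + 1) + u b (k + 1))` and satisfies `‖F‖ ≤ Λ` on the unit disk. The coefficient form
of the Schwarz–Pick lemma, `‖c m‖ ≤ 1 - ‖c 0‖ ^ 2` (`m ≥ 1`) for a holomorphic self-map of the
disk, applied to `F / Λ` gives
`n ‖a n + u b n‖ ≤ (Λ ^ 2 - ‖a 1 + u b 1‖ ^ 2) / Λ ≤ (Λ ^ 2 - 1) / Λ`,
and `u` is chosen to align `a n` with `u b n`.

The coefficient bound reduces to `m = 1` by averaging over the `m`-th roots of unity, which keeps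
exactly the coefficients `c (k * m)`, i.e. produces the self-map `w ↦ ∑ c (k * m) w ^ k`. For
`m = 1` it is the Schwarz lemma for `φ ∘ f`, where `φ w = (w - f 0) / (1 - conj (f 0) * w)` is the
disk automorphism sending `f 0` to `0`.
-/

open Metric Complex

open ComplexConjugate Finset FormalMultilinearSeries

theorem hasFPowerSeriesOnBall_ofScalars_of_hasSum {c : ℕ → ℂ} {f : ℂ → ℂ} {r : ℝ} (hr : 0 < r)
    (hs : ∀ z ∈ ball (0 : ℂ) r, HasSum (fun n ↦ c n * z ^ n) (f z)) :
    HasFPowerSeriesOnBall f (ofScalars ℂ c) 0 (.ofReal r) := by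
  have hrad : .ofReal r ≤ (ofScalars ℂ c).radius := by
    refine ENNReal.le_of_forall_nnreal_lt fun ρ hρ ↦ ?_
    have hρ' : ((ρ : ℝ) : ℂ) ∈ ball (0 : ℂ) r := by
      simpa using ENNReal.coe_lt_ofReal.1 hρ
    refine le_radius_of_tendsto _ (l := 0) ?_
    simpa [ofScalars_norm] using
      tendsto_zero_iff_norm_tendsto_zero.mp (hs _ hρ').summable.tendsto_atTop_zero
  have hr' : 0 < ENNReal.ofReal r := ENNReal.ofReal_pos.2 hr
  refine ((ofScalars ℂ c).hasFPowerSeriesOnBall (hr'.trans_le hrad)).mono hr' hrad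
    |>.congr fun z hz ↦ ?_
  rw [Metric.eball_ofReal] at hz
  rw [← (hs z hz).tsum_eq]
  exact tsum_congr fun n ↦ by rw [apply_eq_pow_smul_coeff, coeff_ofScalars, smul_eq_mul, mul_comm]

theorem hasSum_deriv_of_hasSum {c : ℕ → ℂ} {f : ℂ → ℂ} {r : ℝ} (hr : 0 < r)
    (hs : ∀ z ∈ ball (0 : ℂ) r, HasSum (fun n ↦ c n * z ^ n) (f z)) {z : ℂ}
    (hz : z ∈ ball (0 : ℂ) r) :
    HasSum (fun n ↦ ((n + 1) * c (n + 1)) * z ^ n) (deriv f z) := by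
  have hp := (hasFPowerSeriesOnBall_ofScalars_of_hasSum hr hs).fderiv
  have := (hp.hasSum (y := z) (by rwa [Metric.eball_ofReal])).mapL (ContinuousLinearMap.apply ℂ ℂ 1)
  simpa [apply_eq_pow_smul_coeff, coeff_ofScalars, mul_comm] using this

theorem normSq_one_sub_conj_mul_sub_normSq_sub (a w : ℂ) :
    normSq (1 - conj a * w) - normSq (w - a) = (1 - normSq w) * (1 - normSq a) := by
  simp only [normSq_apply, sub_re, sub_im, mul_re, mul_im, conj_re, conj_im, one_re, one_im]
  ring

noncomputable def diskAutomorphism (a w : ℂ) : ℂ := (w - a) / (1 - conj a * w)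

section diskAutomorphism

variable {a w : ℂ}

theorem one_sub_conj_mul_ne_zero (ha : ‖a‖ < 1) (hw : ‖w‖ ≤ 1) : 1 - conj a * w ≠ 0 := by
  refine sub_ne_zero.2 fun h ↦ ?_
  have : ‖conj a * w‖ < 1 := by
    rw [norm_mul, norm_conj]
    nlinarith [norm_nonneg a, norm_nonneg w]
  simp [← h] at this

theorem norm_diskAutomorphism_le_one (ha : ‖a‖ < 1) (hw : ‖w‖ ≤ 1) :
    ‖diskAutomorphism a w‖ ≤ 1 := by
  have hden := one_sub_conj_mul_ne_zero ha hw
  rw [diskAutomorphism, norm_div, div_le_one (norm_pos_iff.2 hden), ← sq_le_sq₀ (norm_nonneg _)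
    (norm_nonneg _), Complex.sq_norm, Complex.sq_norm]
  have hw' : normSq w ≤ 1 := by rw [normSq_eq_norm_sq]; nlinarith [norm_nonneg w]
  have ha' : normSq a ≤ 1 := by rw [normSq_eq_norm_sq]; nlinarith [norm_nonneg a]
  nlinarith [normSq_one_sub_conj_mul_sub_normSq_sub a w,
    mul_nonneg (sub_nonneg.2 hw') (sub_nonneg.2 ha')]

theorem differentiableAt_diskAutomorphism (ha : ‖a‖ < 1) (hw : ‖w‖ ≤ 1) :
    DifferentiableAt ℂ (diskAutomorphism a) w := by
  unfold diskAutomorphism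
  fun_prop (disch := exact one_sub_conj_mul_ne_zero ha hw)

theorem deriv_diskAutomorphism_self (ha : ‖a‖ < 1) :
    deriv (diskAutomorphism a) a = ((1 - ‖a‖ ^ 2 : ℝ) : ℂ)⁻¹ := by
  have hden := one_sub_conj_mul_ne_zero ha ha.le
  have : HasDerivAt (diskAutomorphism a)
      ((1 * (1 - conj a * a) - (a - a) * -(conj a * 1)) / (1 - conj a * a) ^ 2) a :=
    ((hasDerivAt_id' a).sub_const a).div (((hasDerivAt_id' a).const_mul _).const_sub 1) hden
  rw [this.deriv, conj_mul']
  rw [conj_mul'] at hden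
  push_cast
  field_simp
  ring

theorem diskAutomorphism_self : diskAutomorphism a a = 0 := by
  simp [diskAutomorphism]

end diskAutomorphism

theorem deriv_zero_eq_zero_of_norm_eq_one {f : ℂ → ℂ} (hd : DifferentiableOn ℂ f (ball 0 1))
    (hf : ∀ z ∈ ball (0 : ℂ) 1, ‖f z‖ ≤ 1) (h0 : ‖f 0‖ = 1) : deriv f 0 = 0 := by
  have hmax : IsMaxOn (norm ∘ f) (ball 0 1) 0 := fun z hz ↦ by simpa [h0] using hf z hz
  have hconst := Complex.eqOn_of_isPreconnected_of_isMaxOn_norm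
    (convex_ball (0 : ℂ) 1).isPreconnected isOpen_ball hd (mem_ball_self one_pos) hmax
  rw [(hconst.eventuallyEq_of_mem (ball_mem_nhds _ one_pos)).deriv_eq]
  exact deriv_const _ _

theorem norm_deriv_zero_le_one_sub_sq_norm {f : ℂ → ℂ} (hd : DifferentiableOn ℂ f (ball 0 1))
    (hf : ∀ z ∈ ball (0 : ℂ) 1, ‖f z‖ ≤ 1) : ‖deriv f 0‖ ≤ 1 - ‖f 0‖ ^ 2 := by
  rcases (hf 0 (mem_ball_self one_pos)).eq_or_lt with h0 | h0
  · simp [deriv_zero_eq_zero_of_norm_eq_one hd hf h0, h0]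
  have hpos : 0 < 1 - ‖f 0‖ ^ 2 := by nlinarith [norm_nonneg (f 0)]
  have hφ : ∀ z ∈ ball (0 : ℂ) 1, DifferentiableAt ℂ (diskAutomorphism (f 0)) (f z) :=
    fun z hz ↦ differentiableAt_diskAutomorphism h0 (hf z hz)
  have hschwarz : ‖deriv (diskAutomorphism (f 0) ∘ f) 0‖ ≤ 1 := by
    refine Complex.norm_deriv_le_one_of_mapsTo_ball
      (fun z hz ↦ ((hφ z hz).comp z
        (hd.differentiableAt (isOpen_ball.mem_nhds hz))).differentiableWithinAt)
      (fun z hz ↦ ?_) one_pos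
    simpa [diskAutomorphism_self] using norm_diskAutomorphism_le_one h0 (hf z hz)
  rw [deriv_comp _ (hφ 0 (mem_ball_self one_pos)) (hd.differentiableAt (ball_mem_nhds _ one_pos)),
    deriv_diskAutomorphism_self h0, norm_mul, norm_inv, norm_real, Real.norm_of_nonneg hpos.le,
    inv_mul_le_iff₀ hpos, mul_one] at hschwarz
  exact hschwarz

theorem norm_coeff_one_le_one_sub_sq_norm_coeff_zero {c : ℕ → ℂ} {f : ℂ → ℂ}
    (hs : ∀ z ∈ ball (0 : ℂ) 1, HasSum (fun n ↦ c n * z ^ n) (f z))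
    (hf : ∀ z ∈ ball (0 : ℂ) 1, ‖f z‖ ≤ 1) : ‖c 1‖ ≤ 1 - ‖c 0‖ ^ 2 := by
  have hp := hasFPowerSeriesOnBall_ofScalars_of_hasSum one_pos hs
  have hd : DifferentiableOn ℂ f (ball 0 1) := by
    simpa only [Metric.eball_ofReal] using hp.differentiableOn
  have h0 : f 0 = c 0 := by simpa using (hp.coeff_zero fun _ ↦ 1).symm
  have h1 : deriv f 0 = c 1 := hp.hasFPowerSeriesAt.deriv.trans coeff_ofScalars
  simpa [h0, h1] using norm_deriv_zero_le_one_sub_sq_norm hd hf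

theorem IsPrimitiveRoot.sum_pow_pow_eq_ite_s9 {R : Type*} [CommRing R] [IsDomain R] {ζ : R} {m : ℕ}
    (hζ : IsPrimitiveRoot ζ m) (k : ℕ) :
    ∑ j ∈ range m, (ζ ^ k) ^ j = if m ∣ k then (m : R) else 0 := by
  split_ifs with hk
  · simp [(hζ.pow_eq_one_iff_dvd k).2 hk]
  · have hne : ζ ^ k - 1 ≠ 0 := sub_ne_zero.2 (mt (hζ.pow_eq_one_iff_dvd k).1 hk)
    have hgeom := geom_sum_mul (ζ ^ k) m
    rw [← pow_mul, mul_comm k m, pow_mul, hζ.pow_eq_one, one_pow, sub_self] at hgeom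
    exact (mul_eq_zero.1 hgeom).resolve_right hne

theorem hasSum_multisection {𝕜 : Type*} [NormedField 𝕜] {c : ℕ → 𝕜} {f : 𝕜 → 𝕜} {ζ z : 𝕜} {m : ℕ}
    (hζ : IsPrimitiveRoot ζ m) (hm : (m : 𝕜) ≠ 0)
    (hs : ∀ j, HasSum (fun k ↦ c k * (ζ ^ j * z) ^ k) (f (ζ ^ j * z))) :
    HasSum (fun k ↦ c (k * m) * (z ^ m) ^ k) ((m : 𝕜)⁻¹ * ∑ j ∈ range m, f (ζ ^ j * z)) := by
  have hterm : ∀ k, ∑ j ∈ range m, c k * (ζ ^ j * z) ^ k =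
      if m ∣ k then m * (c k * z ^ k) else 0 := fun k ↦ by
    calc ∑ j ∈ range m, c k * (ζ ^ j * z) ^ k = c k * z ^ k * ∑ j ∈ range m, (ζ ^ k) ^ j := by
          rw [Finset.mul_sum]; exact sum_congr rfl fun j _ ↦ by ring
      _ = _ := by rw [hζ.sum_pow_pow_eq_ite_s9]; split_ifs <;> ring
  have hsum := hasSum_sum fun j (_ : j ∈ range m) ↦ hs j
  simp_rw [hterm] at hsum
  have hinj : Function.Injective (· * m) := mul_left_injective₀ (by rintro rfl; simp at hm)
  rw [← hinj.hasSum_iff fun k hk ↦ if_neg fun ⟨j, hj⟩ ↦ hk ⟨j, by simp [hj, mul_comm]⟩] at hsum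
  refine (hsum.mul_left (m : 𝕜)⁻¹).congr_fun fun k ↦ ?_
  simp [← pow_mul, mul_comm m k, hm]

theorem norm_coeff_le_one_sub_sq_norm_coeff_zero {c : ℕ → ℂ} {f : ℂ → ℂ}
    (hs : ∀ z ∈ ball (0 : ℂ) 1, HasSum (fun n ↦ c n * z ^ n) (f z))
    (hf : ∀ z ∈ ball (0 : ℂ) 1, ‖f z‖ ≤ 1) {m : ℕ} (hm : m ≠ 0) : ‖c m‖ ≤ 1 - ‖c 0‖ ^ 2 := by
  have hζ := Complex.isPrimitiveRoot_exp m hm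
  set ζ := exp (2 * Real.pi * I / m)
  have hrot : ∀ z ∈ ball (0 : ℂ) 1, ∀ j : ℕ, ζ ^ j * z ∈ ball (0 : ℂ) 1 := fun z hz j ↦ by
    simpa [norm_mul, norm_pow, hζ.norm'_eq_one hm] using hz
  have hG : ∀ w ∈ ball (0 : ℂ) 1, ∃ S, HasSum (fun k ↦ c (k * m) * w ^ k) S ∧ ‖S‖ ≤ 1 := by
    intro w hw
    obtain ⟨z, rfl⟩ := IsAlgClosed.exists_pow_nat_eq w (Nat.pos_of_ne_zero hm)
    have hz : z ∈ ball (0 : ℂ) 1 := by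
      simpa [norm_pow, pow_lt_one_iff_of_nonneg (norm_nonneg z) hm] using hw
    refine ⟨_, hasSum_multisection hζ (Nat.cast_ne_zero.2 hm) fun j ↦ hs _ (hrot z hz j), ?_⟩
    calc ‖(m : ℂ)⁻¹ * ∑ j ∈ range m, f (ζ ^ j * z)‖ ≤ (m : ℝ)⁻¹ * ∑ j ∈ range m, 1 := by
          rw [norm_mul, norm_inv, Complex.norm_natCast]
          gcongr
          exact (norm_sum_le _ _).trans (sum_le_sum fun j _ ↦ hf _ (hrot z hz j))
      _ = 1 := by simp [hm]
  choose! G hGsum hGle using hG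
  simpa using norm_coeff_one_le_one_sub_sq_norm_coeff_zero hGsum hGle

theorem mul_norm_coeff_le_sq_sub_sq_norm_coeff_zero {c : ℕ → ℂ} {f : ℂ → ℂ} {M : ℝ} (hM : 0 < M)
    (hs : ∀ z ∈ ball (0 : ℂ) 1, HasSum (fun n ↦ c n * z ^ n) (f z))
    (hf : ∀ z ∈ ball (0 : ℂ) 1, ‖f z‖ ≤ M) {m : ℕ} (hm : m ≠ 0) :
    M * ‖c m‖ ≤ M ^ 2 - ‖c 0‖ ^ 2 := by
  have hnorm : ∀ x : ℂ, ‖(M : ℂ)⁻¹ * x‖ = ‖x‖ / M := fun x ↦ by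
    rw [norm_mul, norm_inv, norm_real, Real.norm_of_nonneg hM.le, inv_mul_eq_div]
  have key := norm_coeff_le_one_sub_sq_norm_coeff_zero (c := fun n ↦ (M : ℂ)⁻¹ * c n)
    (fun z hz ↦ by simpa [mul_assoc] using (hs z hz).mul_left (M : ℂ)⁻¹)
    (fun z hz ↦ by rw [hnorm, div_le_one hM]; exact hf z hz) hm
  simp only [hnorm] at key
  field_simp at key
  nlinarith

theorem exists_norm_eq_one_norm_add_mul_eq (x y : ℂ) :
    ∃ u : ℂ, ‖u‖ = 1 ∧ ‖x + u * y‖ = ‖x‖ + ‖y‖ := by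
  set u := exp ((x.arg - y.arg : ℝ) * I)
  have hexp : u * exp (y.arg * I) = exp (x.arg * I) := by
    rw [← exp_add]; push_cast; ring_nf
  have hsum : x + u * y = ((‖x‖ + ‖y‖ : ℝ) : ℂ) * exp (x.arg * I) := by
    push_cast
    linear_combination -norm_mul_exp_arg_mul_I x - u * norm_mul_exp_arg_mul_I y + (‖y‖ : ℂ) * hexp
  refine ⟨u, norm_exp_ofReal_mul_I _, ?_⟩
  rw [hsum, norm_mul, norm_exp_ofReal_mul_I, mul_one, norm_real,
    Real.norm_of_nonneg (by positivity)]

theorem stmt_9_general (h g : ℂ → ℂ) (a b : ℕ → ℂ) (Λ : ℝ)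
    (hsa : ∀ z ∈ ball (0 : ℂ) 1, HasSum (fun n : ℕ => a n * z ^ n) (h z))
    (hsb : ∀ z ∈ ball (0 : ℂ) 1, HasSum (fun n : ℕ => b n * z ^ n) (g z))
    (h1 : 1 ≤ |‖a 1‖ - ‖b 1‖|)
    (hΛ : 1 ≤ Λ)
    (hbd : ∀ z ∈ ball (0 : ℂ) 1,
      ‖deriv h z‖ + ‖deriv g z‖ ≤ Λ) :
    ∀ n : ℕ, 2 ≤ n →
      ‖a n‖ + ‖b n‖ ≤ (Λ ^ 2 - 1) / (n * Λ) := by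
  intro n hn
  obtain ⟨u, hu, hab⟩ := exists_norm_eq_one_norm_add_mul_eq (a n) (b n)
  set d : ℕ → ℂ := fun k ↦ (k + 1) * (a (k + 1) + u * b (k + 1))
  have hsd : ∀ z ∈ ball (0 : ℂ) 1, HasSum (fun k ↦ d k * z ^ k) (deriv h z + u * deriv g z) :=
    fun z hz ↦ by
      simpa [d, mul_add, add_mul, mul_assoc, mul_left_comm] using
        (hasSum_deriv_of_hasSum one_pos hsa hz).add
          ((hasSum_deriv_of_hasSum one_pos hsb hz).mul_left u)
  have hbdd : ∀ z ∈ ball (0 : ℂ) 1, ‖deriv h z + u * deriv g z‖ ≤ Λ := fun z hz ↦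
    (norm_add_le _ _).trans (by simpa [norm_mul, hu] using hbd z hz)
  have hd0 : 1 ≤ ‖d 0‖ := by
    have := abs_norm_sub_norm_le (a 1) (-(u * b 1))
    rw [norm_neg, norm_mul, hu, one_mul, sub_neg_eq_add] at this
    simpa [d] using h1.trans this
  have hdn : ‖d (n - 1)‖ = n * (‖a n‖ + ‖b n‖) := by
    have hcast : ((n - 1 : ℕ) : ℂ) + 1 = n := by rw [Nat.cast_sub (by omega)]; ring
    simp [d, Nat.sub_add_cancel (by omega : 1 ≤ n), hab, hcast]
  have key := mul_norm_coeff_le_sq_sub_sq_norm_coeff_zero (by linarith) hsd hbdd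
    (m := n - 1) (by omega)
  rw [hdn] at key
  rw [le_div_iff₀ (by positivity)]
  nlinarith

theorem stmt_9 (h g : ℂ → ℂ) (a b : ℕ → ℂ) (Λ : ℝ)
    (hh : DifferentiableOn ℂ h (ball (0 : ℂ) 1))
    (hg : DifferentiableOn ℂ g (ball (0 : ℂ) 1))
    (ha0 : a 0 = 0) (hb0 : b 0 = 0)
    (hsa : ∀ z ∈ ball (0 : ℂ) 1, HasSum (fun n : ℕ => a n * z ^ n) (h z))
    (hsb : ∀ z ∈ ball (0 : ℂ) 1, HasSum (fun n : ℕ => b n * z ^ n) (g z))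
    (h1 : 1 ≤ |‖a 1‖ - ‖b 1‖|)
    (hΛ : 1 ≤ Λ)
    (hbd : ∀ z ∈ ball (0 : ℂ) 1,
      ‖deriv h z‖ + ‖deriv g z‖ ≤ Λ) :
    ∀ n : ℕ, 2 ≤ n →
      ‖a n‖ + ‖b n‖ ≤ (Λ ^ 2 - 1) / (n * Λ) :=
  stmt_9_general h g a b Λ hsa hsb h1 hΛ hbd
end

section
/- Suppose M > 1, ρ₀ = M − √(M²−1), and h, g are holomorphic on the unit disk with h(0) = g(0) = 0, ||h'(0)| − |g'(0)|| = 1, and |h'(z) − h'(0)| + |g'(z) − g'(0)| ≤ (M²−1)(2M|z| − |z|²)/(M − |z|)² for all |z| < ρ₀. Then for every unimodular complex λ, the function f_λ = h + λ g is injective on the disk {|z| < ρ₀}. -/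
open Metric Complex

/-!
Write `f = h + λ g`. Since `|λ| = 1`, `|f'(z) - f'(0)|` is at most the given radial bound, which
is `< 1` for `|z| < ρ₀`, while `|f'(0)| ≥ ||h'(0)| - |g'(0)|| = 1`. On every closed disk of
radius `r < ρ₀`, `f` therefore differs from the linear map `z ↦ f'(0) z` by a function that is
Lipschitz with a constant smaller than `|f'(0)|`, so it is injective there.
-/

theorem Convex.injOn_of_norm_hasDerivWithinAt_sub_le {𝕜 F : Type*} [RCLike 𝕜]
    [NormedAddCommGroup F] [NormedSpace 𝕜 F] {f f' : 𝕜 → F} {s : Set 𝕜} (hs : Convex ℝ s)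
    (hf : ∀ x ∈ s, HasDerivWithinAt f (f' x) s x) {c : F} {C : ℝ} (hC : C < ‖c‖)
    (hbound : ∀ x ∈ s, ‖f' x - c‖ ≤ C) : Set.InjOn f s := by
  intro x hx y hy hxy
  have hlip := hs.norm_image_sub_le_of_norm_hasDerivWithin_le
    (f := fun z => f z - z • c) (fun z hz => (hf z hz).sub ((hasDerivWithinAt_id z s).smul_const c))
    (by simpa using hbound) hx hy
  have hlin : ‖y - x‖ * ‖c‖ ≤ C * ‖y - x‖ := by
    simpa [hxy, ← sub_smul, norm_smul, norm_sub_rev x y] using hlip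
  by_contra hne
  have hpos : 0 < ‖y - x‖ := norm_pos_iff.2 (sub_ne_zero.2 (Ne.symm hne))
  nlinarith

noncomputable def radialBound (M t : ℝ) : ℝ :=
  (M ^ 2 - 1) * (2 * M * t - t ^ 2) / (M - t) ^ 2

-- `radialBound M t = (M² - 1)(M²/(M - t)² - 1)` grows with `t` on `t < M`.
theorem monotoneOn_radialBound {M : ℝ} (hM : 1 ≤ M) : MonotoneOn (radialBound M) (Set.Iio M) := by
  intro a ha b hb hab
  rw [Set.mem_Iio] at ha hb
  have hMa : 0 < (M - a) ^ 2 := by nlinarith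
  have hMb : 0 < (M - b) ^ 2 := by nlinarith
  rw [radialBound, radialBound, div_le_div_iff₀ hMa hMb]
  have hsq : (M - b) ^ 2 ≤ (M - a) ^ 2 := by nlinarith
  nlinarith [mul_nonneg (by nlinarith : (0 : ℝ) ≤ M ^ 2 - 1)
    (mul_nonneg (sq_nonneg M) (sub_nonneg.2 hsq))]

-- With `s = √(M² - 1)`: `(M - t)² - (M² - 1)(2Mt - t²) = M² (M - s - t)(M + s - t)`.
theorem radialBound_lt_one {M t : ℝ} (hM : 1 ≤ M) (ht : t < M - Real.sqrt (M ^ 2 - 1)) :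
    radialBound M t < 1 := by
  set s := Real.sqrt (M ^ 2 - 1)
  have hs0 : 0 ≤ s := Real.sqrt_nonneg _
  have hs2 : s ^ 2 = M ^ 2 - 1 := Real.sq_sqrt (by nlinarith)
  rw [radialBound, div_lt_one (by nlinarith)]
  nlinarith [mul_pos (mul_pos (by nlinarith : (0 : ℝ) < M ^ 2) (by linarith : 0 < M - s - t))
    (by linarith : 0 < M + s - t)]

theorem sub_sqrt_sq_sub_one_lt_one {M : ℝ} (hM : 1 < M) : M - Real.sqrt (M ^ 2 - 1) < 1 := by
  have : M - 1 < Real.sqrt (M ^ 2 - 1) := (Real.lt_sqrt (by linarith)).2 (by nlinarith)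
  linarith

theorem norm_add_mul_sub_add_mul_le {𝕜 : Type*} [NormedField 𝕜] {a b a' b' l : 𝕜} (hl : ‖l‖ = 1) :
    ‖(a + l * b) - (a' + l * b')‖ ≤ ‖a - a'‖ + ‖b - b'‖ := by
  calc ‖(a + l * b) - (a' + l * b')‖ = ‖(a - a') + l * (b - b')‖ := by ring_nf
    _ ≤ ‖a - a'‖ + ‖b - b'‖ := by simpa [hl] using norm_add_le (a - a') (l * (b - b'))

theorem abs_norm_sub_norm_le_norm_add_mul {𝕜 : Type*} [NormedField 𝕜] {a b l : 𝕜} (hl : ‖l‖ = 1) :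
    |‖a‖ - ‖b‖| ≤ ‖a + l * b‖ := by
  simpa [hl] using abs_norm_sub_norm_le a (-(l * b))

theorem stmt_15_general (M : ℝ) (hM : 1 < M) (h g : ℂ → ℂ)
    (hh : DifferentiableOn ℂ h (ball (0 : ℂ) 1))
    (hg : DifferentiableOn ℂ g (ball (0 : ℂ) 1))
    (hlam0 : |‖deriv h 0‖ - ‖deriv g 0‖| = 1)
    (hbd : ∀ z : ℂ, ‖z‖ < M - Real.sqrt (M ^ 2 - 1) →
      ‖deriv h z - deriv h 0‖ + ‖deriv g z - deriv g 0‖ ≤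
        (M ^ 2 - 1) * (2 * M * ‖z‖ - (‖z‖) ^ 2) /
          (M - ‖z‖) ^ 2) :
    ∀ lam : ℂ, ‖lam‖ = 1 →
      Set.InjOn (fun z => h z + lam * g z)
        (ball (0 : ℂ) (M - Real.sqrt (M ^ 2 - 1))) := by
  intro lam hlam
  set ρ := M - Real.sqrt (M ^ 2 - 1)
  have hρM : ρ ≤ M := sub_le_self _ (Real.sqrt_nonneg _)
  have hderiv : ∀ x ∈ ball (0 : ℂ) 1,
      HasDerivAt (fun z => h z + lam * g z) (deriv h x + lam * deriv g x) x := fun x hx =>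
    ((hh.differentiableAt (isOpen_ball.mem_nhds hx)).hasDerivAt.add
      ((hg.differentiableAt (isOpen_ball.mem_nhds hx)).hasDerivAt.const_mul lam))
  have hinj : ∀ r < ρ, Set.InjOn (fun z => h z + lam * g z) (closedBall 0 r) := by
    intro r hr
    refine (convex_closedBall 0 r).injOn_of_norm_hasDerivWithinAt_sub_le
      (fun x hx => (hderiv x ?_).hasDerivWithinAt)
      (c := deriv h 0 + lam * deriv g 0) (C := radialBound M r)
      ((radialBound_lt_one hM.le hr).trans_le ?_) fun x hx => ?_
    · exact closedBall_subset_ball (hr.trans (sub_sqrt_sq_sub_one_lt_one hM)) hx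
    · exact hlam0.symm.le.trans (abs_norm_sub_norm_le_norm_add_mul hlam)
    · rw [mem_closedBall_zero_iff] at hx
      calc _ ≤ ‖deriv h x - deriv h 0‖ + ‖deriv g x - deriv g 0‖ :=
            norm_add_mul_sub_add_mul_le hlam
        _ ≤ radialBound M ‖x‖ := hbd x (hx.trans_lt hr)
        _ ≤ radialBound M r := monotoneOn_radialBound hM.le (hx.trans_lt (hr.trans_le hρM))
            (hr.trans_le hρM) hx
  intro z₁ hz₁ z₂ hz₂
  rw [mem_ball_zero_iff] at hz₁ hz₂
  exact hinj (max ‖z₁‖ ‖z₂‖) (max_lt hz₁ hz₂)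
    (mem_closedBall_zero_iff.2 (le_max_left _ _)) (mem_closedBall_zero_iff.2 (le_max_right _ _))

theorem stmt_15 (M : ℝ) (hM : 1 < M) (h g : ℂ → ℂ)
    (hh : DifferentiableOn ℂ h (ball (0 : ℂ) 1))
    (hg : DifferentiableOn ℂ g (ball (0 : ℂ) 1))
    (h0 : h 0 = 0) (g0 : g 0 = 0)
    (hlam0 : |‖deriv h 0‖ - ‖deriv g 0‖| = 1)
    (hbd : ∀ z : ℂ, ‖z‖ < M - Real.sqrt (M ^ 2 - 1) →
      ‖deriv h z - deriv h 0‖ + ‖deriv g z - deriv g 0‖ ≤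
        (M ^ 2 - 1) * (2 * M * ‖z‖ - (‖z‖) ^ 2) /
          (M - ‖z‖) ^ 2) :
    ∀ lam : ℂ, ‖lam‖ = 1 →
      Set.InjOn (fun z => h z + lam * g z)
        (ball (0 : ℂ) (M - Real.sqrt (M ^ 2 - 1))) :=
  stmt_15_general M hM h g hh hg hlam0 hbd
end
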